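/- Let ũ_n : I_n → ℝ_{≥0} be concave functions with I_n → (−1/2, 1/2) (endpoints converging), all bounded above by a constant R, and with π∫_{I_n} ũ_n² = π for all n. Then the sequence of convex bodies of revolution generated by ũ_n has a subsequence converging in the Hausdorff metric to a convex body with nonempty interior (in particular the limit is not a segment). -/

import Mathlib

/-!
Each body of revolution is convex (concave profile, convex radial function `√(y² + z²)`) and
lies in the fixed compact box `[-1, 1] × closedBall 0 R`, so Blaschke selection (compactness of
the nonempty compact subsets of a compact metric space) yields a Hausdorff-convergent
subsequence, and convexity passes to the limit. Nondegeneracy comes from the volume: `∫ u² = 1`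
on an interval of length at most `6/5` forces `u ≥ 9/10` somewhere, and concavity with `u ≥ 0`
at the endpoints then gives `u ≥ 9/40` on `[-1/10, 1/10]`. Hence every body eventually contains
the ball `closedBall 0 (1/10)` of the sup metric on `ℝ × ℝ × ℝ`, and so does the limit.
-/

open Filter intervalIntegral Metric Set Topology

section HausdorffLimits

variable {α : Type*} [MetricSpace α]

theorem exists_subseq_tendsto_hausdorffDist {s : Set α} (hs : IsCompact s) {K : ℕ → Set α}
    (hK : ∀ n, IsCompact (K n)) (hne : ∀ n, (K n).Nonempty) (hKs : ∀ n, K n ⊆ s) :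
    ∃ L : Set α, IsCompact L ∧ L.Nonempty ∧ ∃ φ : ℕ → ℕ, StrictMono φ ∧
      Tendsto (fun k => hausdorffDist (K (φ k)) L) atTop (𝓝 0) := by
  have := isCompact_iff_compactSpace.1 hs
  have hK_eq : ∀ n, ((↑) : s → α) '' ((↑) ⁻¹' K n) = K n := fun n => by
    rw [Subtype.image_preimage_coe, inter_eq_right.2 (hKs n)]
  let S : ℕ → TopologicalSpace.NonemptyCompacts s := fun n =>
    ⟨⟨(↑) ⁻¹' K n, ((hK n).isClosed.preimage continuous_subtype_val).isCompact⟩, by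
      obtain ⟨x, hx⟩ := hne n
      exact ⟨⟨x, hKs n hx⟩, hx⟩⟩
  obtain ⟨L, φ, hφ, hlim⟩ := CompactSpace.tendsto_subseq S
  refine ⟨(↑) '' (L : Set s), L.isCompact.image continuous_subtype_val, L.nonempty.image _,
    φ, hφ, ?_⟩
  have hdist : ∀ k, dist (S (φ k)) L = hausdorffDist (K (φ k)) ((↑) '' (L : Set s)) := fun k => by
    rw [NonemptyCompacts.dist_eq, ← hausdorffDist_image isometry_subtype_coe]
    exact congrArg (hausdorffDist · _) (hK_eq (φ k))
  simpa only [Function.comp_def, hdist] using tendsto_iff_dist_tendsto_zero.1 hlim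

theorem mem_of_forall_infDist_le {ι : Type*} {l : Filter ι} [l.NeBot] {L : Set α} {x : α}
    (hL : IsClosed L) (hne : L.Nonempty) {f : ι → ℝ} (hf : Tendsto f l (𝓝 0))
    (hx : ∀ i, infDist x L ≤ f i) : x ∈ L :=
  (hL.mem_iff_infDist_zero hne).2 (le_antisymm (ge_of_tendsto' hf hx) infDist_nonneg)

theorem subset_of_tendsto_hausdorffDist {ι : Type*} {l : Filter ι} [l.NeBot]
    {K : ι → Set α} {L s : Set α} (hL : IsClosed L) (hne : L.Nonempty)
    (hfin : ∀ i, hausdorffEDist (K i) L ≠ ⊤)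
    (hlim : Tendsto (fun i => hausdorffDist (K i) L) l (𝓝 0)) (hs : ∀ i, s ⊆ K i) :
    s ⊆ L := fun _ hx =>
  mem_of_forall_infDist_le hL hne hlim fun i => infDist_le_hausdorffDist_of_mem (hs i hx) (hfin i)

end HausdorffLimits

section ConvexHausdorffLimits

variable {E : Type*} [NormedAddCommGroup E] [NormedSpace ℝ E]

theorem Convex.infDist_combo_le_hausdorffDist {K L : Set E} (hK : Convex ℝ K)
    (hfin : hausdorffEDist K L ≠ ⊤) {x y : E} (hx : x ∈ L) (hy : y ∈ L) {a b : ℝ}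
    (ha : 0 ≤ a) (hb : 0 ≤ b) (hab : a + b = 1) :
    infDist (a • x + b • y) K ≤ hausdorffDist K L := by
  refine le_of_forall_gt fun r hr => ?_
  obtain ⟨x', hx'K, hx'⟩ := exists_dist_lt_of_hausdorffDist_lt' hx hr hfin
  obtain ⟨y', hy'K, hy'⟩ := exists_dist_lt_of_hausdorffDist_lt' hy hr hfin
  calc infDist (a • x + b • y) K ≤ dist (a • x + b • y) (a • x' + b • y') :=
        infDist_le_dist_of_mem (hK hx'K hy'K ha hb hab)
    _ ≤ a * dist x x' + b * dist y y' := by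
        refine (dist_add_add_le _ _ _ _).trans ?_
        rw [dist_smul₀, dist_smul₀, Real.norm_of_nonneg ha, Real.norm_of_nonneg hb]
    _ ≤ a * max (dist x x') (dist y y') + b * max (dist x x') (dist y y') := by
        gcongr
        exacts [le_max_left _ _, le_max_right _ _]
    _ = max (dist x x') (dist y y') := by rw [← add_mul, hab, one_mul]
    _ < r := max_lt (by rwa [dist_comm]) (by rwa [dist_comm])

theorem convex_of_tendsto_hausdorffDist {ι : Type*} {l : Filter ι} [l.NeBot]
    {K : ι → Set E} {L : Set E} (hK : ∀ i, Convex ℝ (K i)) (hL : IsClosed L) (hne : L.Nonempty)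
    (hfin : ∀ i, hausdorffEDist (K i) L ≠ ⊤)
    (hlim : Tendsto (fun i => hausdorffDist (K i) L) l (𝓝 0)) : Convex ℝ L := by
  intro x hx y hy a b ha hb hab
  refine mem_of_forall_infDist_le hL hne (by simpa using hlim.const_mul 2) fun i => ?_
  calc infDist (a • x + b • y) L
      ≤ infDist (a • x + b • y) (K i) + hausdorffDist (K i) L :=
        infDist_le_infDist_add_hausdorffDist (hfin i)
    _ ≤ 2 * hausdorffDist (K i) L := by
        linarith [(hK i).infDist_combo_le_hausdorffDist (hfin i) hx hy ha hb hab]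

end ConvexHausdorffLimits

theorem ConcaveOn.mul_dist_le_of_mem_segment {E : Type*} [NormedAddCommGroup E]
    [NormedSpace ℝ E] {s : Set E} {u : E → ℝ} (hu : ConcaveOn ℝ s u) {p q x : E} (hp : p ∈ s)
    (hq : q ∈ s) (huq : 0 ≤ u q) (hx : x ∈ segment ℝ p q) :
    u p * dist x q ≤ u x * dist p q := by
  obtain ⟨a, b, ha, hb, hab, rfl⟩ := hx
  have hdist : dist (a • p + b • q) q = a * dist p q := by
    rw [dist_eq_norm, dist_eq_norm, ← norm_smul_of_nonneg ha]
    congr 1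
    linear_combination (norm := module) hab • q
  have hcomb : a * u p ≤ u (a • p + b • q) := by
    have := hu.2 hp hq ha hb hab
    simp only [smul_eq_mul] at this
    linarith [mul_nonneg hb huq]
  rw [hdist, ← mul_assoc, mul_comm (u p)]
  exact mul_le_mul_of_nonneg_right hcomb dist_nonneg

theorem exists_integral_le_mul_apply {f : ℝ → ℝ} {a b : ℝ} (hab : a ≤ b)
    (hf : ContinuousOn f (Icc a b)) : ∃ x ∈ Icc a b, ∫ t in a..b, f t ≤ (b - a) * f x := by
  obtain ⟨x, hx, hmax⟩ := isCompact_Icc.exists_isMaxOn (nonempty_Icc.2 hab) hf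
  refine ⟨x, hx, ?_⟩
  calc ∫ t in a..b, f t ≤ ∫ _ in a..b, f x :=
        integral_mono_on hab (hf.intervalIntegrable_of_Icc hab) intervalIntegrable_const hmax
    _ = (b - a) * f x := by rw [integral_const, smul_eq_mul]

theorem convexOn_sqrt_sq_add_sq : ConvexOn ℝ univ fun v : ℝ × ℝ => √(v.1 ^ 2 + v.2 ^ 2) := by
  have h : (fun v : ℝ × ℝ => √(v.1 ^ 2 + v.2 ^ 2)) = norm ∘ Complex.equivRealProdLm.symm := by
    ext v
    simp [Complex.norm_eq_sqrt_sq_add_sq]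
  rw [h]
  exact convexOn_univ_norm.comp_linearMap Complex.equivRealProdLm.symm.toLinearMap

theorem norm_le_sqrt_sq_add_sq (v : ℝ × ℝ) : ‖v‖ ≤ √(v.1 ^ 2 + v.2 ^ 2) :=
  max_le (Real.abs_le_sqrt (by nlinarith)) (Real.abs_le_sqrt (by nlinarith))

theorem convex_setOf_fst_mem_and_le {E F : Type*} [AddCommGroup E] [Module ℝ E]
    [AddCommGroup F] [Module ℝ F] {s : Set E} {u : E → ℝ} {f : F → ℝ}
    (hu : ConcaveOn ℝ s u) (hf : ConvexOn ℝ univ f) :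
    Convex ℝ {p : E × F | p.1 ∈ s ∧ f p.2 ≤ u p.1} := by
  rintro ⟨x, v⟩ ⟨hx, hxv⟩ ⟨y, w⟩ ⟨hy, hyw⟩ a b ha hb hab
  refine ⟨hu.1 hx hy ha hb hab, ?_⟩
  calc f (a • v + b • w) ≤ a • f v + b • f w := hf.2 trivial trivial ha hb hab
    _ ≤ a • u x + b • u y := by simp only [smul_eq_mul]; gcongr
    _ ≤ u (a • x + b • y) := hu.2 hx hy ha hb hab

def revolutionBody (a b : ℝ) (u : ℝ → ℝ) : Set (ℝ × ℝ × ℝ) :=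
  {p | p.1 ∈ Icc a b ∧ √(p.2.1 ^ 2 + p.2.2 ^ 2) ≤ u p.1}

section RevolutionBody

variable {a b R : ℝ} {u : ℝ → ℝ}

theorem convex_revolutionBody (hu : ConcaveOn ℝ (Icc a b) u) :
    Convex ℝ (revolutionBody a b u) :=
  convex_setOf_fst_mem_and_le hu convexOn_sqrt_sq_add_sq

theorem revolutionBody_subset (hub : ∀ x ∈ Icc a b, u x ≤ R) :
    revolutionBody a b u ⊆ Icc a b ×ˢ closedBall 0 R := fun p ⟨hx, hp⟩ =>
  ⟨hx, mem_closedBall_zero_iff.2 ((norm_le_sqrt_sq_add_sq p.2).trans (hp.trans (hub _ hx)))⟩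

theorem isCompact_revolutionBody (hcont : ContinuousOn u (Icc a b))
    (hub : ∀ x ∈ Icc a b, u x ≤ R) : IsCompact (revolutionBody a b u) := by
  refine (isCompact_Icc.prod (isCompact_closedBall 0 R)).of_isClosed_subset ?_
    (revolutionBody_subset hub)
  exact (isClosed_Icc.preimage continuous_fst).isClosed_le
    (by fun_prop) (hcont.comp continuous_fst.continuousOn (mapsTo_preimage _ _))

theorem nine_fortieths_le_of_abs_le_tenth (hu : ConcaveOn ℝ (Icc a b) u)
    (hnn : ∀ x ∈ Icc a b, 0 ≤ u x) (ha : a ∈ Icc (-3 / 5) (-2 / 5)) (hb : b ∈ Icc (2 / 5) (3 / 5))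
    {x₀ : ℝ} (hx₀ : x₀ ∈ Icc a b) (hux₀ : 9 / 10 ≤ u x₀) {x : ℝ} (hx : |x| ≤ 1 / 10) :
    9 / 40 ≤ u x := by
  obtain ⟨ha₁, ha₂⟩ := ha
  obtain ⟨hb₁, hb₂⟩ := hb
  obtain ⟨hx₁, hx₂⟩ := abs_le.1 hx
  have hxab : x ∈ Icc a b := ⟨by linarith, by linarith⟩
  have hux := hnn x hxab
  have haI : a ∈ Icc a b := ⟨le_rfl, by linarith⟩
  have hbI : b ∈ Icc a b := ⟨by linarith, le_rfl⟩
  -- `u` dominates the triangle with apex `(x₀, u x₀)` and base `[a, b]`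
  rcases le_total x x₀ with hxx₀ | hx₀x
  · have key := hu.mul_dist_le_of_mem_segment hx₀ haI (hnn a haI)
      (by rw [segment_eq_uIcc, uIcc_of_ge (by linarith)]; exact ⟨by linarith, hxx₀⟩)
    rw [Real.dist_eq, Real.dist_eq, abs_of_nonneg (by linarith),
      abs_of_nonneg (by linarith [hx₀.1])] at key
    nlinarith [hx₀.2]
  · have key := hu.mul_dist_le_of_mem_segment hx₀ hbI (hnn b hbI)
      (by rw [segment_eq_uIcc, uIcc_of_le (by linarith)]; exact ⟨hx₀x, by linarith⟩)
    rw [Real.dist_eq, Real.dist_eq, abs_of_nonpos (by linarith),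
      abs_of_nonpos (by linarith [hx₀.2])] at key
    nlinarith [hx₀.1]

theorem closedBall_subset_revolutionBody (hu : ConcaveOn ℝ (Icc a b) u)
    (hcont : ContinuousOn u (Icc a b)) (hnn : ∀ x ∈ Icc a b, 0 ≤ u x)
    (ha : a ∈ Icc (-3 / 5) (-2 / 5)) (hb : b ∈ Icc (2 / 5) (3 / 5))
    (hint : ∫ x in a..b, u x ^ 2 = 1) :
    closedBall 0 (1 / 10) ⊆ revolutionBody a b u := by
  have hab : a ≤ b := by linarith [ha.2, hb.1]
  obtain ⟨x₀, hx₀, hpeak⟩ := exists_integral_le_mul_apply hab (hcont.pow 2)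
  simp only [Pi.pow_apply, hint] at hpeak
  have hux₀ : 9 / 10 ≤ u x₀ := by
    nlinarith [ha.1, hb.2, hnn x₀ hx₀, sq_nonneg (u x₀ - 9 / 10)]
  rintro ⟨x, y, z⟩ hp
  simp only [mem_closedBall_zero_iff, Prod.norm_def, Real.norm_eq_abs, max_le_iff] at hp
  obtain ⟨hx, hy, hz⟩ := hp
  have hux := nine_fortieths_le_of_abs_le_tenth hu hnn ha hb hx₀ hux₀ hx
  refine ⟨⟨by linarith [ha.2, (abs_le.1 hx).1], by linarith [hb.1, (abs_le.1 hx).2]⟩, ?_⟩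
  refine Real.sqrt_le_iff.2 ⟨by linarith, ?_⟩
  nlinarith [sq_abs y, sq_abs z, abs_nonneg y, abs_nonneg z, abs_nonneg x]

end RevolutionBody

theorem rescaled_bodies_subconverge_to_nondegenerate_convex_body_general
    (c d : ℕ → ℝ) (un : ℕ → ℝ → ℝ) (R : ℝ)
    (hc : Tendsto c atTop (nhds (-(1 / 2)))) (hd : Tendsto d atTop (nhds (1 / 2)))
    (hconc : ∀ n, ConcaveOn ℝ (Set.Icc (c n) (d n)) (un n))
    (hcont : ∀ n, ContinuousOn (un n) (Set.Icc (c n) (d n)))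
    (hnn : ∀ n, ∀ x ∈ Set.Icc (c n) (d n), 0 ≤ un n x)
    (hub : ∀ n, ∀ x ∈ Set.Icc (c n) (d n), un n x ≤ R)
    (hvol : ∀ n, Real.pi * ∫ x in (c n)..(d n), (un n x) ^ 2 = Real.pi) :
    ∃ (φ : ℕ → ℕ), StrictMono φ ∧
      ∃ L : Set (ℝ × ℝ × ℝ),
        IsCompact L ∧ Convex ℝ L ∧ (interior L).Nonempty ∧
        Tendsto
          (fun k =>
            Metric.hausdorffDist
              {p : ℝ × ℝ × ℝ |
                p.1 ∈ Set.Icc (c (φ k)) (d (φ k)) ∧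
                  Real.sqrt (p.2.1 ^ 2 + p.2.2 ^ 2) ≤ un (φ k) p.1}
              L)
          atTop (nhds 0) := by
  have htail : ∀ᶠ n in atTop, c n ∈ Icc (-3 / 5) (-2 / 5) ∧ d n ∈ Icc (2 / 5) (3 / 5) :=
    (hc.eventually (Icc_mem_nhds (by norm_num) (by norm_num))).and
      (hd.eventually (Icc_mem_nhds (by norm_num) (by norm_num)))
  obtain ⟨N, hN⟩ := eventually_atTop.1 htail
  replace hN n : _ := hN (n + N) le_add_self
  set K := fun n => revolutionBody (c (n + N)) (d (n + N)) (un (n + N))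
  have hball : ∀ n, closedBall 0 (1 / 10) ⊆ K n := fun n =>
    closedBall_subset_revolutionBody (hconc _) (hcont _) (hnn _) (hN _).1
      (hN _).2 (mul_left_cancel₀ Real.pi_ne_zero ((hvol _).trans (mul_one _).symm))
  have hne : ∀ n, (K n).Nonempty := fun n => ⟨0, hball n (mem_closedBall_self (by norm_num))⟩
  have hK : ∀ n, IsCompact (K n) := fun n => isCompact_revolutionBody (hcont _) (hub _)
  have hKs : ∀ n, K n ⊆ Icc (-1) 1 ×ˢ closedBall 0 R := fun n =>
    (revolutionBody_subset (hub _)).trans <| prod_mono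
      (Icc_subset_Icc (by linarith [(hN n).1.1]) (by linarith [(hN n).2.2]))
      le_rfl
  obtain ⟨L, hL, hLne, φ, hφ, hlim⟩ :=
    exists_subseq_tendsto_hausdorffDist (isCompact_Icc.prod (isCompact_closedBall 0 R)) hK hne hKs
  have hfin : ∀ k, hausdorffEDist (K (φ k)) L ≠ ⊤ := fun k =>
    hausdorffEDist_ne_top_of_nonempty_of_bounded (hne _) hLne (hK _).isBounded hL.isBounded
  have hLball : closedBall 0 (1 / 10) ⊆ L :=
    subset_of_tendsto_hausdorffDist hL.isClosed hLne hfin hlim fun k => hball (φ k)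
  refine ⟨fun k => φ k + N, hφ.add_const N, L, hL,
    convex_of_tendsto_hausdorffDist (fun k => convex_revolutionBody (hconc _)) hL.isClosed hLne
      hfin hlim, ⟨0, interior_mono hLball ?_⟩, hlim⟩
  exact mem_interior_iff_mem_nhds.2 (closedBall_mem_nhds 0 (by norm_num))

/-- Let `ũ_n : I_n → ℝ_{≥0}` be concave functions, vanishing at the endpoints of
`I_n = (c_n, d_n)` with `c_n → −1/2`, `d_n → 1/2`, all bounded above by `R`, and with
`π∫_{I_n} ũ_n² = π`. Then the convex bodies of revolution generated by the `ũ_n` have a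
subsequence converging in the Hausdorff metric to a convex body with nonempty interior
(in particular the limit is not a segment). -/
theorem rescaled_bodies_subconverge_to_nondegenerate_convex_body
    (c d : ℕ → ℝ) (un : ℕ → ℝ → ℝ) (R : ℝ) (hR : 0 < R)
    (hcd : ∀ n, c n < d n)
    (hc : Tendsto c atTop (nhds (-(1 / 2)))) (hd : Tendsto d atTop (nhds (1 / 2)))
    (hconc : ∀ n, ConcaveOn ℝ (Set.Icc (c n) (d n)) (un n))
    (hcont : ∀ n, ContinuousOn (un n) (Set.Icc (c n) (d n)))
    (hnn : ∀ n, ∀ x ∈ Set.Icc (c n) (d n), 0 ≤ un n x)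
    (hub : ∀ n, ∀ x ∈ Set.Icc (c n) (d n), un n x ≤ R)
    (hend : ∀ n, un n (c n) = 0 ∧ un n (d n) = 0)
    (hvol : ∀ n, Real.pi * ∫ x in (c n)..(d n), (un n x) ^ 2 = Real.pi) :
    ∃ (φ : ℕ → ℕ), StrictMono φ ∧
      ∃ L : Set (ℝ × ℝ × ℝ),
        IsCompact L ∧ Convex ℝ L ∧ (interior L).Nonempty ∧
        Tendsto
          (fun k =>
            Metric.hausdorffDist
              {p : ℝ × ℝ × ℝ |
                p.1 ∈ Set.Icc (c (φ k)) (d (φ k)) ∧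
                  Real.sqrt (p.2.1 ^ 2 + p.2.2 ^ 2) ≤ un (φ k) p.1}
              L)
          atTop (nhds 0) :=
  rescaled_bodies_subconverge_to_nondegenerate_convex_body_general c d un R hc hd hconc hcont hnn
    hub hvol
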